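/- arXiv:1402.5769 — 11 statements merged into one kernel-verified Lean document; each statement's English description precedes it below -/
import Mathlib

section
/- Let G = (V, E) be a finite simple undirected graph. The minimum, over all feasible solutions x of the pairwise formulation, of the objective ∑_{v ∈ V} 1/(1 + ∑_{u ∈ V, u ≠ v} x_{uv}) equals the chromatic number χ(G) of G. -/
open Finset

/-!
A feasible `x` is the same thing as a partition of `V` into independent sets: off the diagonal,
`x u v = 1` says that `u` and `v` lie in the same part, and the triangle inequalities say exactly
that this relation is transitive. Since `1 + ∑_{u ≠ v} x u v` is the size of the part containing
`v`, each part contributes `1` to the objective, which therefore counts the parts. Partitions into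
independent sets are colorings up to renaming the colors, so the minimum is `χ(G)`.
-/

theorem Finset.sum_one_div_card_fiber_eq_card_image {ι α K : Type*} [DecidableEq α]
    [DivisionSemiring K] [CharZero K] (s : Finset ι) (f : ι → α) :
    ∑ i ∈ s, 1 / (#{j ∈ s | f j = f i} : K) = #(s.image f) := by
  rw [← sum_fiberwise_of_maps_to (fun i hi => mem_image_of_mem f hi), card_eq_sum_ones,
    Nat.cast_sum, Nat.cast_one]
  refine sum_congr rfl fun a ha => ?_
  obtain ⟨i, hi, rfl⟩ := mem_image.1 ha
  have hfiber : (#{j ∈ s | f j = f i} : K) ≠ 0 :=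
    Nat.cast_ne_zero.2 (card_ne_zero_of_mem (mem_filter.2 ⟨hi, rfl⟩))
  calc ∑ j ∈ s with f j = f i, 1 / (#{k ∈ s | f k = f j} : K)
      = ∑ j ∈ s with f j = f i, 1 / (#{k ∈ s | f k = f i} : K) :=
        sum_congr rfl fun j hj => by rw [(mem_filter.1 hj).2]
    _ = 1 := by rw [sum_const, nsmul_eq_mul, mul_one_div_cancel hfiber]

noncomputable def pairwiseObjective {V : Type*} [Fintype V] [DecidableEq V]
    (x : V → V → ℝ) : ℝ :=
  ∑ v : V, 1 / (1 + ∑ u ∈ univ.filter (· ≠ v), x u v)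

theorem pairwiseObjective_eq_card_image {V α : Type*} [Fintype V] [DecidableEq V]
    [DecidableEq α] {x : V → V → ℝ} {f : V → α} (h01 : ∀ u v, u ≠ v → x u v = 0 ∨ x u v = 1)
    (hf : ∀ u v, u ≠ v → (x u v = 1 ↔ f u = f v)) :
    pairwiseObjective x = #(univ.image f) := by
  have hite : ∀ u v, u ≠ v → x u v = if f u = f v then 1 else 0 := fun u v huv => by
    rcases h01 u v huv with h | h <;> simp [h, ← hf u v huv]
  have hdenom : ∀ v, 1 + ∑ u ∈ univ.filter (· ≠ v), x u v = #{u | f u = f v} := fun v => by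
    rw [filter_ne', ← sum_boole, ← add_sum_erase _ _ (mem_univ v), if_pos rfl]
    exact congrArg _ (sum_congr rfl fun u hu => hite u v (ne_of_mem_erase hu))
  simp only [pairwiseObjective, hdenom]
  exact sum_one_div_card_fiber_eq_card_image univ f

namespace SimpleGraph

variable {V α : Type*} {G : SimpleGraph V}

theorem Coloring.chromaticNumber_toNat_le_card_image [Fintype V] [DecidableEq α]
    (C : G.Coloring α) : G.chromaticNumber.toNat ≤ #(univ.image C) := by
  let C' : G.Coloring (univ.image C) :=
    Coloring.mk (fun v => ⟨C v, mem_image_of_mem C (mem_univ v)⟩)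
      fun h heq => C.valid h (congrArg Subtype.val heq)
  have hcol := C'.colorable
  rw [Fintype.card_coe] at hcol
  exact ENat.toNat_le_of_le_natCast hcol.chromaticNumber_le

structure IsPairwiseFeasible (G : SimpleGraph V) (x : V → V → ℝ) : Prop where
  symm : ∀ u v, x u v = x v u
  zero_or_one : ∀ u v, u ≠ v → x u v = 0 ∨ x u v = 1
  eq_zero_of_adj : ∀ u v, G.Adj u v → x u v = 0
  triangle : ∀ u v w, u ≠ v → v ≠ w → u ≠ w → x u v + x v w - x u w ≤ 1

namespace IsPairwiseFeasible

variable {x : V → V → ℝ} (hx : G.IsPairwiseFeasible x)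
include hx

theorem eq_one_trans {u v w : V} (huv : u ≠ v) (hvw : v ≠ w) (huw : u ≠ w)
    (h₁ : x u v = 1) (h₂ : x v w = 1) : x u w = 1 := by
  have htri := hx.triangle u v w huv hvw huw
  rcases hx.zero_or_one u w huw with h | h
  · rw [h₁, h₂, h] at htri
    norm_num at htri
  · exact h

def setoid : Setoid V where
  r u v := u = v ∨ x u v = 1
  iseqv.refl _ := Or.inl rfl
  iseqv.symm := by
    rintro u v (rfl | h)
    exacts [Or.inl rfl, Or.inr ((hx.symm v u).trans h)]
  -- `x` is unconstrained on the diagonal; the triangle inequalities only link distinct points.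
  iseqv.trans := by
    intro u v w h₁ h₂
    rcases eq_or_ne u v with rfl | huv
    · exact h₂
    rcases eq_or_ne v w with rfl | hvw
    · exact h₁
    rcases eq_or_ne u w with rfl | huw
    · exact Or.inl rfl
    exact Or.inr (hx.eq_one_trans huv hvw huw (h₁.resolve_left huv) (h₂.resolve_left hvw))

def coloring : G.Coloring (Quotient hx.setoid) :=
  Coloring.mk (Quotient.mk _) fun {u v} hadj heq => by
    rcases Quotient.exact heq with huv | huv
    · exact G.ne_of_adj hadj huv
    · rw [hx.eq_zero_of_adj u v hadj] at huv
      exact zero_ne_one huv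

theorem eq_one_iff_coloring_eq {u v : V} (huv : u ≠ v) :
    x u v = 1 ↔ hx.coloring u = hx.coloring v :=
  ⟨fun h => Quotient.sound (Or.inr h), fun h => (Quotient.exact h).resolve_left huv⟩

theorem chromaticNumber_toNat_le_pairwiseObjective [Fintype V] [DecidableEq V] :
    (G.chromaticNumber.toNat : ℝ) ≤ pairwiseObjective x := by
  classical
  rw [pairwiseObjective_eq_card_image hx.zero_or_one fun _ _ => hx.eq_one_iff_coloring_eq]
  exact_mod_cast hx.coloring.chromaticNumber_toNat_le_card_image

end IsPairwiseFeasible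

noncomputable def Coloring.pairwiseSolution [DecidableEq α] (C : G.Coloring α) (u v : V) : ℝ :=
  if C u = C v then 1 else 0

theorem Coloring.isPairwiseFeasible_pairwiseSolution [DecidableEq α] (C : G.Coloring α) :
    G.IsPairwiseFeasible C.pairwiseSolution where
  symm u v := by simp only [pairwiseSolution, eq_comm]
  zero_or_one u v _ := by unfold pairwiseSolution; split_ifs <;> simp
  eq_zero_of_adj u v hadj := if_neg (C.valid hadj)
  triangle u v w _ _ _ := by
    unfold pairwiseSolution
    split_ifs with h₁ h₂ h₃ <;> try norm_num
    exact h₃ (h₁.trans h₂)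

theorem Coloring.pairwiseObjective_pairwiseSolution [Fintype V] [DecidableEq V] [DecidableEq α]
    (C : G.Coloring α) : pairwiseObjective C.pairwiseSolution = #(univ.image C) :=
  pairwiseObjective_eq_card_image C.isPairwiseFeasible_pairwiseSolution.zero_or_one
    fun u v _ => by unfold pairwiseSolution; split_ifs with h <;> simp [h]

end SimpleGraph

/-- The minimum, over all feasible solutions `x` of the pairwise formulation, of the
objective `∑_{v ∈ V} 1/(1 + ∑_{u ≠ v} x u v)` equals the chromatic number of `G`. -/
theorem pairwise_formulation_optimal_value_eq_chromaticNumber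
    {V : Type*} [Fintype V] [DecidableEq V] (G : SimpleGraph V) :
    IsLeast
      { s : ℝ | ∃ x : V → V → ℝ,
          (∀ u v : V, x u v = x v u) ∧
          (∀ u v : V, u ≠ v → x u v = 0 ∨ x u v = 1) ∧
          (∀ u v : V, G.Adj u v → x u v = 0) ∧
          (∀ u v w : V, u ≠ v → v ≠ w → u ≠ w → x u v + x v w - x u w ≤ 1) ∧
          s = ∑ v : V, 1 / (1 + ∑ u ∈ univ.filter (· ≠ v), x u v) }
      (G.chromaticNumber.toNat : ℝ) := by
  refine ⟨?_, ?_⟩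
  · obtain ⟨C⟩ := G.colorable_chromaticNumber_of_fintype
    have hC := C.isPairwiseFeasible_pairwiseSolution
    have hcard : #(univ.image C) = G.chromaticNumber.toNat :=
      le_antisymm ((card_le_univ _).trans (Fintype.card_fin _).le)
        C.chromaticNumber_toNat_le_card_image
    refine ⟨C.pairwiseSolution, hC.symm, hC.zero_or_one, hC.eq_zero_of_adj, hC.triangle, ?_⟩
    exact (C.pairwiseObjective_pairwiseSolution.trans (congrArg Nat.cast hcard)).symm
  · rintro s ⟨x, hsymm, h01, hadj, htri, rfl⟩
    exact SimpleGraph.IsPairwiseFeasible.chromaticNumber_toNat_le_pairwiseObjective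
      ⟨hsymm, h01, hadj, htri⟩
end

section
/- Let G = (V, E) be a finite simple undirected graph and let x be a feasible solution of the pairwise formulation. Then ∑_{v ∈ V} f_v(x) equals the number of connected components of the graph (V, E_x), where E_x = {{u, v} : x_{uv} = 1}. -/
open Finset

/-- For a feasible solution `x` of the pairwise formulation, `∑_{v} f_v(x)` equals the
number of connected components of the graph `(V, E_x)` with `E_x = {{u,v} : x u v = 1}`. -/
theorem sum_f_eq_card_connectedComponents
    {V : Type*} [Fintype V] [DecidableEq V] (G : SimpleGraph V)
    (x : V → V → ℝ)
    (hsymm : ∀ u v : V, x u v = x v u)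
    (hbin : ∀ u v : V, u ≠ v → x u v = 0 ∨ x u v = 1)
    (hedge : ∀ u v : V, G.Adj u v → x u v = 0)
    (htri : ∀ u v w : V, u ≠ v → v ≠ w → u ≠ w → x u v + x v w - x u w ≤ 1) :
    ∑ v : V, 1 / (1 + ∑ u ∈ univ.filter (· ≠ v), x u v) =
      (Nat.card (SimpleGraph.fromRel fun u v => x u v = 1).ConnectedComponent : ℝ) := by
  classical
  set H := SimpleGraph.fromRel fun u v => x u v = 1 with hH
  -- reachability implies x = 1 (for distinct vertices)
  have key : ∀ u v : V, H.Reachable u v → u = v ∨ x u v = 1 := by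
    intro u v h
    obtain ⟨p⟩ := h
    induction p with
    | nil => exact Or.inl rfl
    | @cons a b c hab p ih =>
      rw [hH, SimpleGraph.fromRel_adj] at hab
      obtain ⟨hne, h1⟩ := hab
      have hxab : x a b = 1 := by
        rcases h1 with h | h
        · exact h
        · rw [hsymm]; exact h
      rcases ih with rfl | hbc
      · exact Or.inr hxab
      · by_cases hac : a = c
        · exact Or.inl hac
        · by_cases hbc2 : b = c
          · subst hbc2; exact Or.inr hxab
          · right
            have := htri a b c hne hbc2 hac
            rw [hxab, hbc] at this
            rcases hbin a c hac with h0 | h1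
            · rw [h0] at this; norm_num at this
            · exact h1
  have reach_iff : ∀ u v : V, H.Reachable u v ↔ (u = v ∨ x u v = 1 ∧ u ≠ v) := by
    intro u v
    constructor
    · intro h
      by_cases huv : u = v
      · exact Or.inl huv
      · rcases key u v h with h' | h'
        · exact Or.inl h'
        · exact Or.inr ⟨h', huv⟩
    · rintro (rfl | ⟨h1, hne⟩)
      · exact SimpleGraph.Reachable.refl _
      · exact SimpleGraph.Adj.reachable
          (by rw [hH, SimpleGraph.fromRel_adj]; exact ⟨hne, Or.inl h1⟩)
  -- the denominator is the size of the connected component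
  have hdenom : ∀ v : V, (1 + ∑ u ∈ univ.filter (· ≠ v), x u v)
      = ((univ.filter fun u => H.connectedComponentMk u = H.connectedComponentMk v).card : ℝ) := by
    intro v
    have hsum : ∑ u ∈ univ.filter (· ≠ v), x u v
        = ((univ.filter fun u => u ≠ v ∧ x u v = 1).card : ℝ) := by
      have hcongr : ∀ u ∈ univ.filter (· ≠ v), x u v = if x u v = 1 then (1:ℝ) else 0 := by
        intro u hu
        simp only [mem_filter, mem_univ, true_and] at hu
        rcases hbin u v hu with h | h <;> simp [h]
      rw [Finset.sum_congr rfl hcongr, Finset.sum_ite, Finset.sum_const, Finset.sum_const_zero,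
        add_zero, nsmul_eq_mul, mul_one, Finset.filter_filter]
    rw [hsum]
    have hset : (univ.filter fun u => H.connectedComponentMk u = H.connectedComponentMk v)
        = insert v (univ.filter fun u => u ≠ v ∧ x u v = 1) := by
      ext u
      simp only [mem_insert, mem_filter, mem_univ, true_and,
        SimpleGraph.ConnectedComponent.eq, reach_iff]
      tauto
    rw [hset, Finset.card_insert_of_notMem (by simp), Nat.cast_add, Nat.cast_one]
    ring
  -- now sum fiberwise over connected components
  have hmain : ∑ v : V, 1 / (1 + ∑ u ∈ univ.filter (· ≠ v), x u v)
      = ∑ c : H.ConnectedComponent, (1 : ℝ) := by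
    rw [← Finset.sum_fiberwise univ (fun v => H.connectedComponentMk v)
      (fun v => 1 / (1 + ∑ u ∈ univ.filter (· ≠ v), x u v))]
    refine Finset.sum_congr rfl fun c _ => ?_
    obtain ⟨w, rfl⟩ := c.exists_rep
    show ∑ i ∈ univ.filter (fun i => H.connectedComponentMk i = H.connectedComponentMk w),
        1 / (1 + ∑ u ∈ univ.filter (· ≠ i), x u i) = 1
    have hcong : ∀ u ∈ univ.filter (fun v => H.connectedComponentMk v = H.connectedComponentMk w),
        (1 : ℝ) / (1 + ∑ u' ∈ univ.filter (· ≠ u), x u' u)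
        = 1 / ((univ.filter fun v =>
            H.connectedComponentMk v = H.connectedComponentMk w).card : ℝ) := by
      intro u hu
      simp only [mem_filter, mem_univ, true_and] at hu
      rw [hdenom u]
      simp only [hu]
    rw [Finset.sum_congr rfl hcong, Finset.sum_const, nsmul_eq_mul]
    have hpos : 0 < ((univ.filter fun v =>
        H.connectedComponentMk v = H.connectedComponentMk w).card) := by
      apply Finset.card_pos.mpr
      exact ⟨w, Finset.mem_filter.mpr ⟨Finset.mem_univ w, rfl⟩⟩
    rw [mul_one_div, div_self (Nat.cast_ne_zero.mpr hpos.ne')]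
  rw [hmain, Finset.sum_const, nsmul_eq_mul, mul_one, Nat.card_eq_fintype_card]
  rfl
end

section
/- Let G = (V, E) be a finite simple undirected graph and let x be a feasible solution of the pairwise formulation. Then in the graph (V, E_x), where E_x = {{u, v} : x_{uv} = 1}, every connected component is a clique; that is, any two distinct vertices lying in the same connected component of (V, E_x) are adjacent in (V, E_x). -/
/-- For a feasible solution `x` of the pairwise formulation, every connected component of
the graph `(V, E_x)` is a clique: any two distinct vertices in the same connected
component are adjacent. -/
theorem components_of_Ex_are_cliques
    {V : Type*} [Fintype V] [DecidableEq V] (G : SimpleGraph V)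
    (x : V → V → ℝ)
    (hsymm : ∀ u v : V, x u v = x v u)
    (hbin : ∀ u v : V, u ≠ v → x u v = 0 ∨ x u v = 1)
    (hedge : ∀ u v : V, G.Adj u v → x u v = 0)
    (htri : ∀ u v w : V, u ≠ v → v ≠ w → u ≠ w → x u v + x v w - x u w ≤ 1) :
    ∀ u v : V, (SimpleGraph.fromRel fun a b => x a b = 1).Reachable u v → u ≠ v →
      (SimpleGraph.fromRel fun a b => x a b = 1).Adj u v := by
  have key : ∀ u v : V, (SimpleGraph.fromRel fun a b => x a b = 1).Reachable u v →
      u = v ∨ x u v = 1 := by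
    intro u v h
    obtain ⟨w⟩ := h
    induction w with
    | nil => exact Or.inl rfl
    | @cons a b c hab p ih =>
      rw [SimpleGraph.fromRel_adj] at hab
      obtain ⟨hne, hx⟩ := hab
      have hxab : x a b = 1 := by
        rcases hx with h | h
        · exact h
        · rw [hsymm]; exact h
      by_cases hbc : b = c
      · subst hbc; exact Or.inr hxab
      · have hxbc : x b c = 1 := by
          rcases ih with h | h
          · exact absurd h hbc
          · exact h
        by_cases hac : a = c
        · exact Or.inl hac
        · right
          have := htri a b c hne hbc hac
          rcases hbin a c hac with h0 | h1
          · rw [hxab, hxbc, h0] at this; linarith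
          · exact h1
  intro u v hr hne
  rcases key u v hr with h | h
  · exact absurd h hne
  · exact (SimpleGraph.fromRel_adj ..).mpr ⟨hne, Or.inl h⟩
end

section
/- Let G = (V, E) be a finite simple undirected graph, let x be a feasible solution of the pairwise formulation, and suppose the vertex v belongs to a connected component of the graph (V, E_x) containing exactly k vertices, where E_x = {{u, v} : x_{uv} = 1}. Then 1 + ∑_{u ∈ V, u ≠ v} x_{uv} = k, and hence f_v(x) = 1/k. -/
open Finset

/-- If `v` belongs to a connected component of `(V, E_x)` with exactly `k` vertices,
then `1 + ∑_{u ≠ v} x u v = k`, and hence `f_v(x) = 1 / k`. -/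
theorem one_add_sum_eq_component_card
    {V : Type*} [Fintype V] [DecidableEq V] (G : SimpleGraph V)
    (x : V → V → ℝ)
    (hsymm : ∀ u v : V, x u v = x v u)
    (hbin : ∀ u v : V, u ≠ v → x u v = 0 ∨ x u v = 1)
    (hedge : ∀ u v : V, G.Adj u v → x u v = 0)
    (htri : ∀ u v w : V, u ≠ v → v ≠ w → u ≠ w → x u v + x v w - x u w ≤ 1)
    (v : V) (k : ℕ)
    (hk : Set.ncard {u : V | (SimpleGraph.fromRel fun a b => x a b = 1).Reachable v u} = k) :
    1 + ∑ u ∈ univ.filter (· ≠ v), x u v = (k : ℝ) ∧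
    1 / (1 + ∑ u ∈ univ.filter (· ≠ v), x u v) = 1 / (k : ℝ) := by
  classical
  set H := SimpleGraph.fromRel fun a b => x a b = 1 with hH
  have hadj : ∀ a b, H.Adj a b → a ≠ b ∧ x a b = 1 := by
    intro a b hab
    rcases hab with ⟨hne, h | h⟩
    · exact ⟨hne, h⟩
    · exact ⟨hne, (hsymm a b).trans h⟩
  -- main characterization
  have step : ∀ a b (p : H.Walk a b), (a = v ∨ x v a = 1) → (b = v ∨ x v b = 1) := by
    intro a b p
    induction p with
    | nil => exact id
    | @cons a c b h q ih =>
      intro ha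
      apply ih
      obtain ⟨hac, hxac⟩ := hadj _ _ h
      by_cases hcv : c = v
      · exact Or.inl hcv
      · right
        rcases ha with rfl | hxva
        · exact hxac
        · by_cases hav : a = v
          · rw [← hav]; exact hxac
          · have hvc : v ≠ c := fun h' => hcv h'.symm
            have hva : v ≠ a := fun h' => hav h'.symm
            have := htri v a c hva hac hvc
            rcases hbin v c hvc with h0 | h1
            · rw [hxva, hxac, h0] at this; linarith
            · exact h1
  have key : ∀ u, H.Reachable v u ↔ (u = v ∨ x v u = 1) := by
    intro u
    constructor
    · intro h
      obtain ⟨p⟩ := h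
      exact step v u p (Or.inl rfl)
    · intro h
      by_cases huv : u = v
      · subst huv; exact SimpleGraph.Reachable.refl u
      · rcases h with rfl | hx
        · exact absurd rfl huv
        · exact (SimpleGraph.Adj.reachable ⟨fun h' => huv h'.symm, Or.inl hx⟩)
  -- rewrite the set as a finset
  have hset : {u : V | H.Reachable v u} = ↑(univ.filter fun u => u = v ∨ x v u = 1) := by
    ext u
    simp [key u]
  rw [hset, Set.ncard_coe_finset] at hk
  have hsplit : (univ.filter fun u => u = v ∨ x v u = 1) =
      insert v (univ.filter fun u => u ≠ v ∧ x v u = 1) := by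
    ext u
    by_cases huv : u = v <;> simp [huv]
  have hcard : k = 1 + (univ.filter fun u => u ≠ v ∧ x v u = 1).card := by
    rw [← hk, hsplit, Finset.card_insert_of_notMem (by simp)]
    omega
  have hsum : ∑ u ∈ univ.filter (· ≠ v), x u v =
      ((univ.filter fun u => u ≠ v ∧ x v u = 1).card : ℝ) := by
    have : ∀ u ∈ univ.filter (· ≠ v), x u v = if x v u = 1 then (1:ℝ) else 0 := by
      intro u hu
      simp only [Finset.mem_filter] at hu
      rcases hbin v u (fun h' => hu.2 h'.symm) with h0 | h1
      · rw [hsymm u v, h0]; simp [h0]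
      · rw [hsymm u v, h1]; simp [h1]
    rw [Finset.sum_congr rfl this, Finset.sum_ite, Finset.sum_const, Finset.sum_const]
    simp only [nsmul_eq_mul, mul_one, mul_zero, smul_zero, add_zero]
    congr 1
    rw [Finset.filter_filter]
  have h1 : 1 + ∑ u ∈ univ.filter (· ≠ v), x u v = (k : ℝ) := by
    rw [hsum, hcard]
    push_cast
    ring
  exact ⟨h1, by rw [h1]⟩
end

section
/- Let G = (V, E) be a finite simple undirected graph, let x be a feasible solution of the pairwise formulation, and let V′ be the vertex set of any connected component of the graph (V, E_x), where E_x = {{u, v} : x_{uv} = 1}. Then ∑_{v ∈ V′} f_v(x) = 1. -/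
open Finset

/-- For a feasible solution `x` of the pairwise formulation and any connected component of
`(V, E_x)` with vertex set `V'`, the sum of `f_v(x)` over `v ∈ V'` equals `1`. -/
theorem sum_f_over_component_eq_one
    {V : Type*} [Fintype V] [DecidableEq V] (G : SimpleGraph V)
    (x : V → V → ℝ)
    (hsymm : ∀ u v : V, x u v = x v u)
    (hbin : ∀ u v : V, u ≠ v → x u v = 0 ∨ x u v = 1)
    (hedge : ∀ u v : V, G.Adj u v → x u v = 0)
    (htri : ∀ u v w : V, u ≠ v → v ≠ w → u ≠ w → x u v + x v w - x u w ≤ 1)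
    (C : (SimpleGraph.fromRel fun a b => x a b = 1).ConnectedComponent)
    (V' : Set V)
    (hV' : V' = {v : V | (SimpleGraph.fromRel fun a b => x a b = 1).connectedComponentMk v = C}) :
    ∑ᶠ v ∈ V', 1 / (1 + ∑ u ∈ univ.filter (· ≠ v), x u v) = 1 := by
  classical
  subst hV'
  -- transitivity from the triangle inequalities
  have trans1 : ∀ a b c : V, x a b = 1 → x b c = 1 → a ≠ c → x a c = 1 := by
    intro a b c hab hbc hac
    by_cases hab' : a = b
    · subst hab'; exact hbc
    by_cases hbc' : b = c
    · subst hbc'; exact hab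
    have h := htri a b c hab' hbc' hac
    rcases hbin a c hac with h0 | h1
    · rw [hab, hbc, h0] at h; linarith
    · exact h1
  -- characterization of reachability
  have hr : ∀ u v : V, (SimpleGraph.fromRel fun a b => x a b = 1).Reachable u v ↔
      (u = v ∨ x u v = 1) := by
    intro u v
    constructor
    · intro h
      rw [SimpleGraph.reachable_iff_reflTransGen] at h
      induction h with
      | refl => exact Or.inl rfl
      | @tail b c hwb hadj ih =>
        rw [SimpleGraph.fromRel_adj] at hadj
        obtain ⟨hbc, hx⟩ := hadj
        have hxbc : x b c = 1 := by
          rcases hx with h | h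
          · exact h
          · rw [hsymm b c]; exact h
        rcases ih with rfl | hub
        · exact Or.inr hxbc
        · by_cases huc : u = c
          · exact Or.inl huc
          · exact Or.inr (trans1 u b c hub hxbc huc)
    · rintro (rfl | h)
      · exact SimpleGraph.Reachable.refl u
      · by_cases huv : u = v
        · exact huv ▸ SimpleGraph.Reachable.refl u
        · exact SimpleGraph.Adj.reachable (by
            rw [SimpleGraph.fromRel_adj]
            exact ⟨huv, Or.inl h⟩)
  set S : Finset V := univ.filter
    (fun u => (SimpleGraph.fromRel fun a b => x a b = 1).connectedComponentMk u = C) with hS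
  have hV'S : {v : V | (SimpleGraph.fromRel fun a b => x a b = 1).connectedComponentMk v = C}
      = ↑S := by
    ext u
    simp [hS]
  obtain ⟨v0, hv0⟩ := C.exists_rep
  have hv0S : v0 ∈ S := by
    rw [hS, mem_filter]
    exact ⟨mem_univ v0, hv0⟩
  have hScard : 0 < S.card := card_pos.mpr ⟨v0, hv0S⟩
  -- the inner sum
  have hinner : ∀ v ∈ S, ∑ u ∈ univ.filter (· ≠ v), x u v = (S.card : ℝ) - 1 := by
    intro v hv
    have hvC : (SimpleGraph.fromRel fun a b => x a b = 1).connectedComponentMk v = C := by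
      rw [hS, mem_filter] at hv; exact hv.2
    have hmem : ∀ u : V, u ≠ v → (x u v = 1 ↔ u ∈ S) := by
      intro u huv
      rw [hS, mem_filter]
      constructor
      · intro h1
        refine ⟨mem_univ u, ?_⟩
        rw [← hvC]
        exact SimpleGraph.ConnectedComponent.sound ((hr u v).mpr (Or.inr h1))
      · rintro ⟨-, hC⟩
        have : (SimpleGraph.fromRel fun a b => x a b = 1).Reachable u v := by
          rw [← SimpleGraph.ConnectedComponent.eq, hC, hvC]
        rcases (hr u v).mp this with rfl | h1
        · exact absurd rfl huv
        · exact h1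
    have heq : ∑ u ∈ univ.filter (· ≠ v), x u v
        = ∑ u ∈ univ.filter (· ≠ v), (if u ∈ S then (1:ℝ) else 0) := by
      apply Finset.sum_congr rfl
      intro u hu
      have huv : u ≠ v := by simpa using hu
      by_cases h : u ∈ S
      · simp [h, (hmem u huv).mpr h]
      · have hne : x u v ≠ 1 := fun h1 => h ((hmem u huv).mp h1)
        rcases hbin u v huv with h0 | h1
        · simp [h, h0]
        · exact absurd h1 hne
    rw [heq, Finset.sum_ite_mem, Finset.sum_const, nsmul_eq_mul, mul_one]
    have hint : (univ.filter (· ≠ v)) ∩ S = S.erase v := by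
      ext u
      simp [Finset.mem_erase, and_comm]
    rw [hint, Finset.card_erase_of_mem hv]
    have h1 : (1:ℕ) ≤ S.card := hScard
    push_cast [h1]
    ring
  rw [hV'S, finsum_mem_coe_finset]
  have hterm : ∀ v ∈ S, 1 / (1 + ∑ u ∈ univ.filter (· ≠ v), x u v) = 1 / (S.card : ℝ) := by
    intro v hv
    rw [hinner v hv]
    ring_nf
  rw [Finset.sum_congr rfl hterm, Finset.sum_const, nsmul_eq_mul]
  have : (S.card : ℝ) ≠ 0 := Nat.cast_ne_zero.mpr hScard.ne'
  field_simp
end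

section
/- Let G = (V, E) be a finite simple undirected graph and let c : V → C be a proper coloring of G (c(u) ≠ c(v) whenever {u, v} ∈ E). Define x by x_{uv} = 1 if c(u) = c(v) (for distinct u, v) and x_{uv} = 0 otherwise. Then x is a feasible solution of the pairwise formulation, and ∑_{v ∈ V} f_v(x) equals the number of colors used by c, i.e., the cardinality of the image of c. -/
open Finset

/-- From a proper coloring `c` of `G`, the function `x` with `x u v = 1` iff `c u = c v`
(for distinct `u, v`) is a feasible solution of the pairwise formulation, and
`∑_v f_v(x)` equals the number of colors used by `c`. -/
theorem coloring_gives_feasible_solution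
    {V C : Type*} [Fintype V] [DecidableEq V] [DecidableEq C]
    (G : SimpleGraph V) (c : V → C)
    (hc : ∀ u v : V, G.Adj u v → c u ≠ c v)
    (x : V → V → ℝ)
    (hx : ∀ u v : V, u ≠ v → x u v = if c u = c v then 1 else 0) :
    (∀ u v : V, u ≠ v → x u v = x v u) ∧
    (∀ u v : V, u ≠ v → x u v = 0 ∨ x u v = 1) ∧
    (∀ u v : V, G.Adj u v → x u v = 0) ∧
    (∀ u v w : V, u ≠ v → v ≠ w → u ≠ w → x u v + x v w - x u w ≤ 1) ∧
    ∑ v : V, 1 / (1 + ∑ u ∈ univ.filter (· ≠ v), x u v) = (Set.ncard (Set.range c) : ℝ) := by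
  refine ⟨?_, ?_, ?_, ?_, ?_⟩
  · intro u v huv
    rw [hx u v huv, hx v u huv.symm]
    by_cases h : c u = c v
    · rw [if_pos h, if_pos h.symm]
    · rw [if_neg h, if_neg (fun h' => h h'.symm)]
  · intro u v huv
    rw [hx u v huv]
    by_cases h : c u = c v <;> simp [h]
  · intro u v huv
    rw [hx u v huv.ne]
    simp [hc u v huv]
  · intro u v w huv hvw huw
    rw [hx u v huv, hx v w hvw, hx u w huw]
    split_ifs with h1 h2 h3 <;> try norm_num
    exact absurd (h1.trans h2) h3
  · have key : ∀ v : V, ∑ u ∈ univ.filter (· ≠ v), x u v =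
        ((univ.filter (fun u => c u = c v)).card : ℝ) - 1 := by
      intro v
      have : ∑ u ∈ univ.filter (· ≠ v), x u v =
          ∑ u ∈ univ.filter (· ≠ v), (if c u = c v then (1:ℝ) else 0) := by
        apply Finset.sum_congr rfl
        intro u hu
        exact hx u v (by simpa using hu)
      rw [this, Finset.sum_boole, Finset.filter_filter]
      have hcard : (univ.filter (fun u => u ≠ v ∧ c u = c v)).card =
          (univ.filter (fun u => c u = c v)).card - 1 := by
        have hsub : univ.filter (fun u => u ≠ v ∧ c u = c v) =
            (univ.filter (fun u => c u = c v)).erase v := by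
          ext u
          simp [Finset.mem_erase, and_comm]
        rw [hsub, Finset.card_erase_of_mem (by simp)]
      have hpos : 1 ≤ (univ.filter (fun u => c u = c v)).card :=
        Finset.card_pos.mpr ⟨v, by simp⟩
      rw [hcard, Nat.cast_sub hpos, Nat.cast_one]
    have hsum : ∑ v : V, 1 / (1 + ∑ u ∈ univ.filter (· ≠ v), x u v) =
        ∑ v : V, 1 / ((univ.filter (fun u => c u = c v)).card : ℝ) := by
      apply Finset.sum_congr rfl
      intro v _
      rw [key v]; ring_nf
    rw [hsum]
    have hrange : (Set.ncard (Set.range c) : ℝ) = ((univ.image c).card : ℝ) := by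
      rw [← Set.ncard_coe_finset]
      congr 1
      rw [Finset.coe_image, Finset.coe_univ, Set.image_univ]
    rw [hrange]
    rw [← Finset.sum_fiberwise_of_maps_to (g := c) (t := univ.image c)
      (fun v _ => Finset.mem_image_of_mem c (mem_univ v))]
    rw [Finset.card_eq_sum_ones (univ.image c)]
    push_cast
    apply Finset.sum_congr rfl
    intro b hb
    obtain ⟨v0, _, hv0⟩ := Finset.mem_image.mp hb
    have : ∀ v ∈ univ.filter (fun v => c v = b),
        (1:ℝ) / ((univ.filter (fun u => c u = c v)).card) =
        1 / ((univ.filter (fun u => c u = b)).card) := by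
      intro v hv
      have : c v = b := by simpa using hv
      rw [this]
    rw [Finset.sum_congr rfl this, Finset.sum_const, nsmul_eq_mul]
    have hpos : 0 < (univ.filter (fun u => c u = b)).card :=
      Finset.card_pos.mpr ⟨v0, by simp [hv0]⟩
    field_simp
end

section
/- Let G = (V, E) be a finite simple undirected graph and let x be a feasible solution of the pairwise formulation. Then there exists a proper coloring of G using exactly k colors, where k is the number of connected components of the graph (V, E_x) with E_x = {{u, v} : x_{uv} = 1}. Consequently, χ(G) ≤ ∑_{v ∈ V} f_v(x). -/
/-!
The relation `u = v ∨ x u v = 1` is an equivalence relation: the triangle inequalities make it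
transitive. Hence `(V, E_x)` is a disjoint union of cliques, and `x` never joins the endpoints of
an edge of `G`, so coloring each vertex by its component of `(V, E_x)` is a proper coloring. The
clique containing `v` has exactly `1 + ∑_{u ≠ v} x u v` vertices, so `∑_v f_v(x)` gives weight
`1` to each clique and equals the number of components.
-/

open Finset

theorem Finset.sum_inv_card_fiber {ι κ K : Type*} [DecidableEq κ] [DivisionSemiring K] [CharZero K]
    (s : Finset ι) (g : ι → κ) :
    ∑ i ∈ s, (#{j ∈ s | g j = g i} : K)⁻¹ = #(s.image g) := by
  rw [card_eq_sum_ones, Nat.cast_sum, Nat.cast_one]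
  refine (sum_image' (fun i => (#{j ∈ s | g j = g i} : K)⁻¹) fun i hi => ?_).symm
  have hfiber : ∀ j ∈ s.filter (g · = g i), #{j' ∈ s | g j' = g j} = #{j ∈ s | g j = g i} :=
    fun j hj => by rw [(mem_filter.1 hj).2]
  have hpos : (#{j ∈ s | g j = g i} : K) ≠ 0 :=
    Nat.cast_ne_zero.2 (card_ne_zero_of_mem (mem_filter.2 ⟨hi, rfl⟩))
  rw [sum_congr rfl fun j hj => by rw [hfiber j hj], sum_const, nsmul_eq_mul, mul_inv_cancel₀ hpos]

namespace SimpleGraph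

variable {V : Type*}

theorem reachable_fromRel_iff {r : V → V → Prop} (hr : ∀ a b, r a b → r b a)
    (htrans : ∀ a b c, a ≠ c → r a b → r b c → r a c) {a b : V} :
    (fromRel r).Reachable a b ↔ a = b ∨ r a b := by
  refine ⟨fun h => ?_, ?_⟩
  · rw [reachable_iff_reflTransGen] at h
    induction h with
    | refl => exact Or.inl rfl
    | @tail c d _ hcd ih =>
      have hcd : r c d := ((fromRel_adj r c d).1 hcd).2.elim id (hr d c)
      rcases ih with rfl | hac
      · exact Or.inr hcd
      · exact or_iff_not_imp_left.2 fun had => htrans a c d had hac hcd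
  · rintro (rfl | hab)
    · exact Reachable.refl a
    · by_cases h : a = b
      · exact h ▸ Reachable.refl a
      · exact ((fromRel_adj r a b).2 ⟨h, Or.inl hab⟩).reachable

theorem exists_surjective_coloring_of_not_reachable [Finite V] {G H : SimpleGraph V}
    (h : ∀ u v, G.Adj u v → ¬ H.Reachable u v) :
    ∃ c : V → Fin (Nat.card H.ConnectedComponent),
      (∀ u v, G.Adj u v → c u ≠ c v) ∧ Function.Surjective c := by
  let e := Finite.equivFin H.ConnectedComponent
  refine ⟨e ∘ H.connectedComponentMk, fun u v huv hc => h u v huv ?_,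
    e.surjective.comp Quot.mk_surjective⟩
  exact ConnectedComponent.eq.1 (e.injective hc)

theorem chromaticNumber_toNat_le {G : SimpleGraph V} {k : ℕ} {c : V → Fin k}
    (hc : ∀ u v, G.Adj u v → c u ≠ c v) : G.chromaticNumber.toNat ≤ k :=
  ENat.toNat_le_of_le_natCast (Colorable.chromaticNumber_le ⟨Coloring.mk c (hc _ _)⟩)

theorem sum_inv_card_reachable {K : Type*} [DivisionSemiring K] [CharZero K] [Fintype V]
    (H : SimpleGraph V) [DecidableRel H.Reachable] :
    ∑ v, (#{u | H.Reachable u v} : K)⁻¹ = Nat.card H.ConnectedComponent := by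
  classical
  calc ∑ v, (#{u | H.Reachable u v} : K)⁻¹
      = ∑ v, (#{u | H.connectedComponentMk u = H.connectedComponentMk v} : K)⁻¹ := by
        simp_rw [ConnectedComponent.eq]
    _ = (#(univ.image H.connectedComponentMk) : K) := sum_inv_card_fiber univ H.connectedComponentMk
    _ = (Nat.card H.ConnectedComponent : K) := by
        rw [image_univ_of_surjective (f := H.connectedComponentMk) Quot.mk_surjective, card_univ,
          Nat.card_eq_fintype_card]

end SimpleGraph

section PairwiseFormulation

open SimpleGraph

variable {V : Type*} {x : V → V → ℝ}

theorem eq_one_trans_of_triangle_ineq (hbin : ∀ u v : V, u ≠ v → x u v = 0 ∨ x u v = 1)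
    (htri : ∀ u v w : V, u ≠ v → v ≠ w → u ≠ w → x u v + x v w - x u w ≤ 1)
    (a b c : V) (hac : a ≠ c) (hab : x a b = 1) (hbc : x b c = 1) : x a c = 1 := by
  by_cases h₁ : a = b
  · exact h₁ ▸ hbc
  by_cases h₂ : b = c
  · exact h₂ ▸ hab
  have := htri a b c h₁ h₂ hac
  exact (hbin a c hac).resolve_left fun h => by linarith

theorem reachable_fromRel_eq_one_iff (hsymm : ∀ u v : V, x u v = x v u)
    (hbin : ∀ u v : V, u ≠ v → x u v = 0 ∨ x u v = 1)
    (htri : ∀ u v w : V, u ≠ v → v ≠ w → u ≠ w → x u v + x v w - x u w ≤ 1) {a b : V} :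
    (fromRel fun a b => x a b = 1).Reachable a b ↔ a = b ∨ x a b = 1 :=
  reachable_fromRel_iff (fun a b h => (hsymm b a).trans h) (eq_one_trans_of_triangle_ineq hbin htri)

theorem one_add_sum_eq_card_reachable [Fintype V] [DecidableEq V]
    (hsymm : ∀ u v : V, x u v = x v u)
    (hbin : ∀ u v : V, u ≠ v → x u v = 0 ∨ x u v = 1)
    (htri : ∀ u v w : V, u ≠ v → v ≠ w → u ≠ w → x u v + x v w - x u w ≤ 1)
    [DecidableRel (fromRel fun a b => x a b = 1).Reachable] (v : V) :
    1 + ∑ u ∈ univ.filter (· ≠ v), x u v =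
      #{u | (fromRel fun a b => x a b = 1).Reachable u v} := by
  have hx : ∀ u ∈ univ.erase v,
      x u v = if (fromRel fun a b => x a b = 1).Reachable u v then 1 else 0 := fun u hu => by
    have huv := ne_of_mem_erase hu
    rcases hbin u v huv with h | h <;> simp [reachable_fromRel_eq_one_iff hsymm hbin htri, huv, h]
  rw [filter_ne', sum_congr rfl hx, ← sum_boole, ← add_sum_erase _ _ (mem_univ v),
    if_pos (Reachable.refl v)]

end PairwiseFormulation

/-- From a feasible solution `x` of the pairwise formulation one obtains a proper coloring
of `G` using exactly `k` colors, where `k` is the number of connected components of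
`(V, E_x)`; consequently `χ(G) ≤ ∑_v f_v(x)`. -/
theorem feasible_solution_gives_coloring
    {V : Type*} [Fintype V] [DecidableEq V] (G : SimpleGraph V)
    (x : V → V → ℝ)
    (hsymm : ∀ u v : V, x u v = x v u)
    (hbin : ∀ u v : V, u ≠ v → x u v = 0 ∨ x u v = 1)
    (hedge : ∀ u v : V, G.Adj u v → x u v = 0)
    (htri : ∀ u v w : V, u ≠ v → v ≠ w → u ≠ w → x u v + x v w - x u w ≤ 1)
    (k : ℕ)
    (hk : Nat.card (SimpleGraph.fromRel fun a b => x a b = 1).ConnectedComponent = k) :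
    (∃ c : V → Fin k, (∀ u v : V, G.Adj u v → c u ≠ c v) ∧ Function.Surjective c) ∧
    (G.chromaticNumber.toNat : ℝ) ≤ ∑ v : V, 1 / (1 + ∑ u ∈ univ.filter (· ≠ v), x u v) := by
  classical
  let H := SimpleGraph.fromRel fun a b => x a b = 1
  have hsep : ∀ u v, G.Adj u v → ¬ H.Reachable u v := fun u v huv h => by
    rcases (reachable_fromRel_eq_one_iff hsymm hbin htri).1 h with rfl | h
    · exact G.irrefl huv
    · simp [hedge u v huv] at h
  subst hk
  obtain ⟨c, hproper, hsurj⟩ := SimpleGraph.exists_surjective_coloring_of_not_reachable hsep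
  refine ⟨⟨c, hproper, hsurj⟩, ?_⟩
  calc (G.chromaticNumber.toNat : ℝ) ≤ Nat.card H.ConnectedComponent := by
        exact_mod_cast SimpleGraph.chromaticNumber_toNat_le hproper
    _ = ∑ v, (#{u | H.Reachable u v} : ℝ)⁻¹ := (H.sum_inv_card_reachable).symm
    _ = _ := sum_congr rfl fun v _ => by
        rw [one_add_sum_eq_card_reachable hsymm hbin htri, one_div]
end

section
/- Let n be a positive integer and let d be an integer with 0 ≤ d ≤ n − 1. Then u_d(d) = 1/(1 + d), and u_d(d) ≥ u_i(d) for every integer i with 0 ≤ i ≤ n − 1; in particular, max_{0 ≤ i ≤ n−1} u_i(d) = 1/(1 + d). Consequently, the minimum of the set {f ∈ ℝ : f ≥ u_i(d) for all integers 0 ≤ i ≤ n − 1} equals 1/(1 + d). -/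
/-!
Over the common denominator one finds
`1/(1+d) - u_i(d) = (i - d)(i - d + 1) / ((i+1)(i+2)(d+1))`,
and the product of the consecutive integers `i - d` and `i - d + 1` is never negative.
So `u_d(d) = 1/(1+d)` is the largest value, attained at `i = d`, and it is therefore also the
least upper bound of the values `u_i(d)`.
-/

theorem Int.mul_add_one_nonneg (m : ℤ) : 0 ≤ m * (m + 1) := by
  rcases le_or_gt 0 m with hm | hm
  · positivity
  · nlinarith

/-- The affine function `u_i` of the statement. -/
noncomputable def secant (i : ℕ) (x : ℝ) : ℝ :=
  -(x - i) / ((i + 1) * (i + 2)) + 1 / (i + 1)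

theorem secant_self (d : ℕ) : secant d d = 1 / (1 + d) := by
  unfold secant
  field_simp
  ring

theorem inv_one_add_sub_secant (i d : ℕ) :
    1 / (1 + (d : ℝ)) - secant i d = (i - d) * (i - d + 1) / ((i + 1) * (i + 2) * (1 + d)) := by
  unfold secant
  field_simp
  ring

theorem secant_le_inv_one_add (i d : ℕ) : secant i d ≤ 1 / (1 + (d : ℝ)) := by
  have hnum : (0 : ℝ) ≤ (i - d) * (i - d + 1) := by
    exact_mod_cast Int.mul_add_one_nonneg ((i : ℤ) - d)
  have hdiff := inv_one_add_sub_secant i d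
  have : 0 ≤ 1 / (1 + (d : ℝ)) - secant i d := hdiff ▸ by positivity
  linarith

theorem max_secant_eq_inv_one_add_general
    (u : ℕ → ℝ → ℝ)
    (hu : ∀ (i : ℕ) (d : ℝ),
      u i d = -(d - (i : ℝ)) / (((i : ℝ) + 1) * ((i : ℝ) + 2)) + 1 / ((i : ℝ) + 1))
    (n : ℕ) (d : ℕ) (hd : d ≤ n - 1) :
    u d (d : ℝ) = 1 / (1 + (d : ℝ)) ∧
    (∀ i : ℕ, i ≤ n - 1 → u d (d : ℝ) ≥ u i (d : ℝ)) ∧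
    IsGreatest {r : ℝ | ∃ i : ℕ, i ≤ n - 1 ∧ r = u i (d : ℝ)} (1 / (1 + (d : ℝ))) ∧
    IsLeast {f : ℝ | ∀ i : ℕ, i ≤ n - 1 → f ≥ u i (d : ℝ)} (1 / (1 + (d : ℝ))) := by
  obtain rfl : u = secant := funext₂ hu
  have hle : ∀ i : ℕ, secant i d ≤ secant d d := fun i => secant_self d ▸ secant_le_inv_one_add i d
  rw [← secant_self d]
  refine ⟨rfl, fun i _ => hle i, ⟨⟨d, hd, rfl⟩, ?_⟩, ⟨fun i _ => hle i, fun f hf => hf d hd⟩⟩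
  rintro r ⟨i, -, rfl⟩
  exact hle i

/-- For `0 ≤ d ≤ n - 1`, one has `u_d(d) = 1/(1+d)` and `u_d(d) ≥ u_i(d)` for all
`0 ≤ i ≤ n - 1`; in particular `max_{0 ≤ i ≤ n-1} u_i(d) = 1/(1+d)`, and the minimum of
`{f : ℝ | f ≥ u_i(d) for all 0 ≤ i ≤ n - 1}` equals `1/(1+d)`. -/
theorem max_secant_eq_inv_one_add
    (u : ℕ → ℝ → ℝ)
    (hu : ∀ (i : ℕ) (d : ℝ),
      u i d = -(d - (i : ℝ)) / (((i : ℝ) + 1) * ((i : ℝ) + 2)) + 1 / ((i : ℝ) + 1))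
    (n : ℕ) (hn : 0 < n) (d : ℕ) (hd : d ≤ n - 1) :
    u d (d : ℝ) = 1 / (1 + (d : ℝ)) ∧
    (∀ i : ℕ, i ≤ n - 1 → u d (d : ℝ) ≥ u i (d : ℝ)) ∧
    IsGreatest {r : ℝ | ∃ i : ℕ, i ≤ n - 1 ∧ r = u i (d : ℝ)} (1 / (1 + (d : ℝ))) ∧
    IsLeast {f : ℝ | ∀ i : ℕ, i ≤ n - 1 → f ≥ u i (d : ℝ)} (1 / (1 + (d : ℝ))) :=
  max_secant_eq_inv_one_add_general u hu n d hd
end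

section
/- Let G = (V, E) be a finite simple undirected graph with |V| = n. Consider the MILP formulation: minimize ∑_{v ∈ V} f_v over all feasible solutions x of the pairwise formulation and all real numbers f_v (v ∈ V) satisfying f_v ≥ u_i(∑_{u ∈ V, u ≠ v} x_{uv}) for every integer i with 0 ≤ i ≤ n − 1. The optimal value of this MILP equals the chromatic number χ(G). -/
/-!
A feasible pairwise solution `x` is, off the diagonal, the indicator of an equivalence relation
on `V` (the triangle inequalities give transitivity) whose classes are independent sets, i.e. the
colour classes of a proper colouring. If `v` lies in a class of size `k`, its degree
`∑_{w ≠ v} x w v` is `k - 1`, and the constraint for `i = k - 1` forces `f v ≥ 1 / k`. Summing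
`1 / k` over a class gives `1`, so the objective is at least the number of classes, hence at
least `χ(G)`. Conversely, an optimal colouring together with `f v = 1 / k` is feasible, because
every `u_i` lies below `d ↦ 1 / (d + 1)` at the natural numbers, and its objective is the number
of non-empty colour classes, at most `χ(G)`.
-/

open Finset

/-- `u_i`: the secant of the convex map `d ↦ 1 / (d + 1)` through `d = i` and `d = i + 1`. -/
noncomputable def invSuccSecant (i : ℕ) (d : ℝ) : ℝ :=
  -(d - (i : ℝ)) / (((i : ℝ) + 1) * ((i : ℝ) + 2)) + 1 / ((i : ℝ) + 1)

lemma invSuccSecant_natCast_self (i : ℕ) : invSuccSecant i i = 1 / ((i : ℝ) + 1) := by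
  simp [invSuccSecant]

lemma invSuccSecant_natCast_le (i d : ℕ) : invSuccSecant i d ≤ 1 / ((d : ℝ) + 1) := by
  have hconvex : (0 : ℝ) ≤ ((d : ℝ) - i) * ((d : ℝ) - i - 1) := by
    rcases le_or_gt d i with h | h
    · have h' : (d : ℝ) ≤ i := by exact_mod_cast h
      nlinarith
    · have h' : (i : ℝ) + 1 ≤ d := by exact_mod_cast h
      nlinarith
  rw [invSuccSecant, div_add_div _ _ (by positivity) (by positivity),
    div_le_div_iff₀ (by positivity) (by positivity)]
  nlinarith

section

variable {V α : Type*} [DecidableEq α]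

lemma ite_eq_add_ite_eq_sub_ite_eq_le_one (C : V → α) (a b c : V) :
    ((if C a = C b then 1 else 0) + (if C b = C c then 1 else 0)
      - (if C a = C c then 1 else 0) : ℝ) ≤ 1 := by
  split_ifs with hab hbc hac <;> first | exact absurd (hab.trans hbc) hac | norm_num

variable [Fintype V]

lemma sum_one_div_card_fiber (C : V → α) :
    ∑ v, 1 / (#{w | C w = C v} : ℝ) = #(univ.image C) := by
  rw [sum_comp (fun c => 1 / (#{w | C w = c} : ℝ)) C, card_eq_sum_ones, Nat.cast_sum]
  refine sum_congr rfl fun c hc => ?_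
  obtain ⟨v, -, rfl⟩ := mem_image.1 hc
  have : (#{w | C w = C v} : ℝ) ≠ 0 := by
    exact_mod_cast (card_pos.2 ⟨v, by simp⟩).ne'
  simp [this]

lemma chromaticNumber_toNat_le_card_image (G : SimpleGraph V) (C : V → α)
    (hC : ∀ a b, G.Adj a b → C a ≠ C b) : G.chromaticNumber.toNat ≤ #(univ.image C) := by
  let C' : G.Coloring (univ.image C) :=
    SimpleGraph.Coloring.mk (fun v => ⟨C v, mem_image_of_mem C (mem_univ v)⟩)
      fun h heq => hC _ _ h (congrArg Subtype.val heq)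
  exact ENat.toNat_le_of_le_natCast (by simpa using C'.colorable.chromaticNumber_le)

lemma chromaticNumber_toNat_le_sum (G : SimpleGraph V) (C : V → α)
    (hC : ∀ a b, G.Adj a b → C a ≠ C b) (f : V → ℝ)
    (hf : ∀ v, 1 / (#{w | C w = C v} : ℝ) ≤ f v) :
    (G.chromaticNumber.toNat : ℝ) ≤ ∑ v, f v :=
  calc (G.chromaticNumber.toNat : ℝ)
      ≤ #(univ.image C) := by exact_mod_cast chromaticNumber_toNat_le_card_image G C hC
    _ = ∑ v, 1 / (#{w | C w = C v} : ℝ) := (sum_one_div_card_fiber C).symm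
    _ ≤ ∑ v, f v := sum_le_sum fun v _ => hf v

variable [DecidableEq V]

lemma sum_ne_add_one_eq_card_fiber (C : V → α) (x : V → V → ℝ)
    (hx : ∀ a b, a ≠ b → x a b = if C a = C b then 1 else 0) (v : V) :
    ∑ w ∈ univ.filter (· ≠ v), x w v + 1 = #{w | C w = C v} := by
  rw [filter_ne', sum_congr rfl fun w hw => hx w v (ne_of_mem_erase hw)]
  simpa [sum_boole] using sum_erase_add univ (fun w => if C w = C v then (1 : ℝ) else 0)
    (mem_univ v)

lemma exists_card_fiber_eq_add_one (C : V → α) (x : V → V → ℝ)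
    (hx : ∀ a b, a ≠ b → x a b = if C a = C b then 1 else 0) (v : V) :
    ∃ d : ℕ, #{w | C w = C v} = d + 1 ∧ ∑ w ∈ univ.filter (· ≠ v), x w v = d := by
  obtain ⟨d, hd⟩ : ∃ d, #{w | C w = C v} = d + 1 :=
    Nat.exists_eq_add_one.2 (card_pos.2 ⟨v, mem_filter.2 ⟨mem_univ v, rfl⟩⟩)
  refine ⟨d, hd, ?_⟩
  have hdeg := sum_ne_add_one_eq_card_fiber C x hx v
  rwa [hd, Nat.cast_add_one, add_left_inj] at hdeg

end

section

variable {V : Type*} (x : V → V → ℝ) (hsym : ∀ a b, x a b = x b a)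
  (h01 : ∀ a b, a ≠ b → x a b = 0 ∨ x a b = 1)
  (htri : ∀ a b c, a ≠ b → b ≠ c → a ≠ c → x a b + x b c - x a c ≤ 1)

def pairwiseSetoid : Setoid V where
  r a b := a = b ∨ x a b = 1
  iseqv := by
    refine ⟨fun _ => Or.inl rfl, ?_, ?_⟩
    · rintro a b (rfl | h)
      · exact Or.inl rfl
      · exact Or.inr (hsym a b ▸ h)
    · intro a b c hab hbc
      by_cases hac : a = c
      · exact Or.inl hac
      rcases eq_or_ne a b with rfl | hab'
      · exact hbc
      rcases eq_or_ne b c with rfl | hbc'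
      · exact hab
      have := htri a b c hab' hbc' hac
      rcases h01 a c hac with h | h
      · rw [hab.resolve_left hab', hbc.resolve_left hbc', h] at this
        norm_num at this
      · exact Or.inr h

lemma eq_ite_mk_pairwiseSetoid_eq [DecidableEq (Quotient (pairwiseSetoid x hsym h01 htri))]
    (a b : V) (hab : a ≠ b) :
    x a b = if (⟦a⟧ : Quotient (pairwiseSetoid x hsym h01 htri)) = ⟦b⟧ then 1 else 0 := by
  split_ifs with h
  · exact (Quotient.exact h).resolve_left hab
  · exact (h01 a b hab).resolve_right fun h1 => h (Quotient.sound (Or.inr h1))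

end

theorem chromaticNumber_toNat_le_objective {V : Type*} [Fintype V] [DecidableEq V]
    (G : SimpleGraph V) (x : V → V → ℝ) (f : V → ℝ) (hsym : ∀ a b, x a b = x b a)
    (h01 : ∀ a b, a ≠ b → x a b = 0 ∨ x a b = 1) (hadj : ∀ a b, G.Adj a b → x a b = 0)
    (htri : ∀ a b c, a ≠ b → b ≠ c → a ≠ c → x a b + x b c - x a c ≤ 1)
    (hf : ∀ v, ∀ i : ℕ, i ≤ Fintype.card V - 1 →
      f v ≥ invSuccSecant i (∑ w ∈ univ.filter (· ≠ v), x w v)) :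
    (G.chromaticNumber.toNat : ℝ) ≤ ∑ v, f v := by
  classical
  let C : V → Quotient (pairwiseSetoid x hsym h01 htri) := Quotient.mk _
  have hx := eq_ite_mk_pairwiseSetoid_eq x hsym h01 htri
  refine chromaticNumber_toNat_le_sum G C (fun a b hab hC => ?_) f fun v => ?_
  · have h := hx a b hab.ne
    rw [if_pos hC, hadj a b hab] at h
    exact zero_ne_one h
  · obtain ⟨d, hcard, hdeg⟩ := exists_card_fiber_eq_add_one C x hx v
    have hd : d ≤ Fintype.card V - 1 := by
      have := card_le_univ {w | C w = C v}
      omega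
    have h := hf v d hd
    rwa [hdeg, invSuccSecant_natCast_self, ← Nat.cast_add_one, ← hcard] at h

/-- The optimal value of the MILP formulation (minimize `∑_v f_v` subject to the pairwise
feasibility constraints on `x` and `f_v ≥ u_i(∑_{u ≠ v} x u v)` for `0 ≤ i ≤ n - 1`)
equals the chromatic number of `G`. -/
theorem milp_optimal_value_eq_chromaticNumber
    {V : Type*} [Fintype V] [DecidableEq V] (G : SimpleGraph V)
    (n : ℕ) (hn : n = Fintype.card V)
    (u : ℕ → ℝ → ℝ)
    (hu : ∀ (i : ℕ) (d : ℝ),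
      u i d = -(d - (i : ℝ)) / (((i : ℝ) + 1) * ((i : ℝ) + 2)) + 1 / ((i : ℝ) + 1)) :
    IsLeast
      { s : ℝ | ∃ (x : V → V → ℝ) (f : V → ℝ),
          (∀ u v : V, x u v = x v u) ∧
          (∀ u v : V, u ≠ v → x u v = 0 ∨ x u v = 1) ∧
          (∀ u v : V, G.Adj u v → x u v = 0) ∧
          (∀ u v w : V, u ≠ v → v ≠ w → u ≠ w → x u v + x v w - x u w ≤ 1) ∧
          (∀ v : V, ∀ i : ℕ, i ≤ n - 1 → f v ≥ u i (∑ w ∈ univ.filter (· ≠ v), x w v)) ∧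
          s = ∑ v : V, f v }
      (G.chromaticNumber.toNat : ℝ) := by
  obtain rfl : u = invSuccSecant := funext₂ hu
  subst hn
  refine ⟨?_, fun s ⟨x, f, hsym, h01, hadj, htri, hf, hs⟩ =>
    hs ▸ chromaticNumber_toNat_le_objective G x f hsym h01 hadj htri hf⟩
  obtain ⟨C⟩ := G.colorable_chromaticNumber_of_fintype
  refine ⟨fun a b => if C a = C b then 1 else 0, fun v => 1 / #{w | C w = C v},
    fun a b => by simp only [eq_comm], fun a b _ => by dsimp only; split_ifs <;> simp,
    fun a b hab => if_neg (C.valid hab),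
    fun a b c _ _ _ => ite_eq_add_ite_eq_sub_ite_eq_le_one C a b c, fun v i _ => ?_, ?_⟩
  · obtain ⟨d, hcard, hdeg⟩ := exists_card_fiber_eq_add_one C _ (fun _ _ _ => rfl) v
    dsimp only
    rw [hdeg, hcard, Nat.cast_add_one]
    exact invSuccSecant_natCast_le i d
  · refine le_antisymm
      (chromaticNumber_toNat_le_sum G C (fun _ _ h => C.valid h) _ fun _ => le_rfl) ?_
    rw [sum_one_div_card_fiber]
    exact_mod_cast (card_le_univ _).trans_eq (Fintype.card_fin _)
end

section
/- Let G = (V, E) be a finite simple undirected graph and let x be a feasible solution of the pairwise formulation. Then for every vertex v ∈ V, the set {v} ∪ {u ∈ V : x_{uv} = 1} is an independent set of G. -/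
/-- For a feasible solution `x` of the pairwise formulation and any vertex `v`, the set
`{v} ∪ {u : x u v = 1}` is an independent set of `G`. -/
theorem color_class_is_independent
    {V : Type*} [Fintype V] [DecidableEq V] (G : SimpleGraph V)
    (x : V → V → ℝ)
    (hsymm : ∀ u v : V, x u v = x v u)
    (hbin : ∀ u v : V, u ≠ v → x u v = 0 ∨ x u v = 1)
    (hedge : ∀ u v : V, G.Adj u v → x u v = 0)
    (htri : ∀ u v w : V, u ≠ v → v ≠ w → u ≠ w → x u v + x v w - x u w ≤ 1)
    (v : V) :
    ∀ a ∈ ({v} ∪ {u : V | x u v = 1} : Set V),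
      ∀ b ∈ ({v} ∪ {u : V | x u v = 1} : Set V), a ≠ b → ¬ G.Adj a b := by
  have key : ∀ a : V, x a v = 1 → ¬ G.Adj a v := by
    intro a ha hadj
    have := hedge a v hadj
    linarith
  intro a ha b hb hab hadj
  rcases ha with ha | ha <;> rcases hb with hb | hb
  · exact hab (ha.trans hb.symm)
  · simp only [Set.mem_singleton_iff] at ha
    subst ha
    exact key b hb (hadj.symm)
  · simp only [Set.mem_singleton_iff] at hb
    subst hb
    exact key a ha hadj
  · simp only [Set.mem_setOf_eq] at ha hb
    have hav : a ≠ v := by rintro rfl; exact key b hb hadj.symm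
    have hbv : b ≠ v := by rintro rfl; exact key a ha hadj
    have h1 := htri a v b hav (Ne.symm hbv) hab
    have h2 := hedge a b hadj
    have h3 := hsymm v b
    linarith
end

section
/- Let G = (V, E) be a finite simple undirected graph, let v ∈ V, and let |I_v| denote the maximum cardinality of an independent set of G containing v. Then for every feasible solution x of the pairwise formulation, ∑_{u ∈ V, u ≠ v} x_{uv} ≤ |I_v| − 1. -/
open Finset

/-- If `k` is the maximum cardinality of an independent set of `G` containing `v`, then
for every feasible solution `x` of the pairwise formulation,
`∑_{u ≠ v} x u v ≤ k - 1`. -/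
theorem simple_cut_valid
    {V : Type*} [Fintype V] [DecidableEq V] (G : SimpleGraph V)
    (v : V) (k : ℕ)
    (hk : IsGreatest {m : ℕ | ∃ s : Finset V, v ∈ s ∧
      (∀ a ∈ s, ∀ b ∈ s, a ≠ b → ¬ G.Adj a b) ∧ s.card = m} k)
    (x : V → V → ℝ)
    (hsymm : ∀ u w : V, x u w = x w u)
    (hbin : ∀ u w : V, u ≠ w → x u w = 0 ∨ x u w = 1)
    (hedge : ∀ u w : V, G.Adj u w → x u w = 0)
    (htri : ∀ u w y : V, u ≠ w → w ≠ y → u ≠ y → x u w + x w y - x u y ≤ 1) :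
    ∑ u ∈ univ.filter (· ≠ v), x u v ≤ (k : ℝ) - 1 := by
  classical
  set S : Finset V := univ.filter (fun u => u ≠ v ∧ x u v = 1) with hS
  have hvS : v ∉ S := by simp [hS]
  -- the sum equals S.card
  have hsum : ∑ u ∈ univ.filter (· ≠ v), x u v = (S.card : ℝ) := by
    have h1 : ∑ u ∈ univ.filter (· ≠ v), x u v = ∑ u ∈ S, x u v := by
      refine (Finset.sum_subset ?_ ?_).symm
      · intro u hu
        simp only [hS, mem_filter] at hu ⊢
        exact ⟨hu.1, hu.2.1⟩
      · intro u hu hnot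
        simp only [hS, mem_filter, mem_univ, true_and, not_and] at hu hnot
        rcases hbin u v hu with h | h
        · exact h
        · exact absurd h (hnot hu)
    rw [h1]
    rw [Finset.sum_congr rfl (fun u hu => by
      simp only [hS, mem_filter] at hu; exact hu.2.2)]
    simp
  -- S ∪ {v} is independent
  have hindep : ∀ a ∈ insert v S, ∀ b ∈ insert v S, a ≠ b → ¬ G.Adj a b := by
    have hone : ∀ a ∈ S, x a v = 1 := by
      intro a ha; simp only [hS, mem_filter] at ha; exact ha.2.2
    have hnev : ∀ a ∈ S, a ≠ v := by
      intro a ha; simp only [hS, mem_filter] at ha; exact ha.2.1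
    have hnotadjv : ∀ a ∈ S, ¬ G.Adj a v := by
      intro a ha hadj
      have := hedge a v hadj
      rw [hone a ha] at this; norm_num at this
    intro a ha b hb hab hadj
    rcases mem_insert.mp ha with rfl | ha
    · rcases mem_insert.mp hb with rfl | hb
      · exact hab rfl
      · exact hnotadjv b hb (hadj.symm)
    · rcases mem_insert.mp hb with rfl | hb
      · exact hnotadjv a ha hadj
      · have h := htri a v b (hnev a ha) (Ne.symm (hnev b hb)) hab
        rw [hone a ha, hsymm v b, hone b hb, hedge a b hadj] at h
        norm_num at h
  -- so card bound
  have hcard : S.card + 1 ≤ k := by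
    have : S.card + 1 = (insert v S).card := (Finset.card_insert_of_notMem hvS).symm
    rw [this]
    exact hk.2 ⟨insert v S, mem_insert_self v S, hindep, rfl⟩
  rw [hsum]
  have : (S.card : ℝ) + 1 ≤ (k : ℝ) := by exact_mod_cast hcard
  linarith
end
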